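/- Let y ↦ P(X | Y=y) be an L-Lipschitz Markov kernel and z ↦ P(Y | Z=z) an M-Lipschitz Markov kernel (in the bounded Lipschitz metric on the target space of probability measures). Then the composed kernel z ↦ P(X|Y) ∘ P(Y|Z=z), sending z to the law D ↦ ∫ P(X ∈ D | Y=y) dP(y|Z=z), is max{1, L}·M-Lipschitz. -/

import Mathlib

open MeasureTheory ProbabilityTheory

/-- Bounded Lipschitz distance on a metric space. -/
noncomputable def BLdist {α : Type*} [MeasurableSpace α] [PseudoMetricSpace α]
    (μ ν : Measure α) : ℝ :=
  sSup {r | ∃ f : α → ℝ, (∀ a, |f a| ≤ 1) ∧ LipschitzWith 1 f ∧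
    r = |(∫ a, f a ∂μ) - ∫ a, f a ∂ν|}

/-!
Write `K = max 1 L`. For a test function `f` in the bounded Lipschitz unit ball, the function
`g y = K⁻¹ ∫ f d(κ y)` is again in that ball: it is bounded by `K⁻¹ ≤ 1`, and it is
`K⁻¹ L ≤ 1`-Lipschitz because `κ` is `L`-Lipschitz for `BLdist`. Since
`∫ f d((κ ∘ₖ η) z) = K ∫ g d(η z)`, testing `η z` and `η z'` against `g` gives the bound
`K M d(z, z')`.
-/

lemma abs_integral_le_one_of_abs_le_one {α : Type*} [MeasurableSpace α] (μ : Measure α)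
    [IsProbabilityMeasure μ] {f : α → ℝ} (hf : ∀ a, |f a| ≤ 1) : |∫ a, f a ∂μ| ≤ 1 := by
  simpa using norm_integral_le_of_norm_le_const
    (ae_of_all μ fun a => (Real.norm_eq_abs (f a)).trans_le (hf a))

section BoundedLipschitz

variable {α : Type*} [MeasurableSpace α] [PseudoMetricSpace α]

lemma abs_sub_integral_le_BLdist (μ ν : Measure α) [IsProbabilityMeasure μ]
    [IsProbabilityMeasure ν] {f : α → ℝ} (hb : ∀ a, |f a| ≤ 1) (hf : LipschitzWith 1 f) :
    |(∫ a, f a ∂μ) - ∫ a, f a ∂ν| ≤ BLdist μ ν := by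
  refine le_csSup ⟨2, ?_⟩ ⟨f, hb, hf, rfl⟩
  rintro _ ⟨g, hg, -, rfl⟩
  have hμ := abs_integral_le_one_of_abs_le_one μ hg
  have hν := abs_integral_le_one_of_abs_le_one ν hg
  linarith [abs_sub (∫ a, g a ∂μ) (∫ a, g a ∂ν)]

lemma BLdist_le {μ ν : Measure α} {c : ℝ}
    (h : ∀ f : α → ℝ, (∀ a, |f a| ≤ 1) → LipschitzWith 1 f →
      |(∫ a, f a ∂μ) - ∫ a, f a ∂ν| ≤ c) :
    BLdist μ ν ≤ c := by
  refine csSup_le ⟨0, 0, by simp, LipschitzWith.const' 0, by simp⟩ ?_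
  rintro _ ⟨f, hb, hf, rfl⟩
  exact h f hb hf

end BoundedLipschitz

lemma abs_inv_max_one_mul_le_one {a : ℝ} (L : ℝ) (ha : |a| ≤ 1) : |(max 1 L)⁻¹ * a| ≤ 1 := by
  have hK : 1 ≤ max 1 L := le_max_left 1 L
  rw [abs_mul, abs_inv, abs_of_pos (zero_lt_one.trans_le hK), inv_mul_le_iff₀ (by positivity),
    mul_one]
  exact ha.trans hK

lemma lipschitzWith_one_inv_max_one_mul {Y : Type*} [PseudoMetricSpace Y] {h : Y → ℝ} {L : ℝ}
    (hh : ∀ y y', |h y - h y'| ≤ L * dist y y') :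
    LipschitzWith 1 fun y => (max 1 L)⁻¹ * h y := by
  have hK : 0 < max 1 L := zero_lt_one.trans_le (le_max_left 1 L)
  refine LipschitzWith.of_dist_le_mul fun y y' => ?_
  rw [Real.dist_eq, ← mul_sub, abs_mul, abs_of_pos (inv_pos.2 hK), inv_mul_le_iff₀ hK,
    NNReal.coe_one, one_mul]
  exact (hh y y').trans (mul_le_mul_of_nonneg_right (le_max_right 1 L) dist_nonneg)

theorem stmt_15_general {X Y Z : Type*}
    [MetricSpace X] [MeasurableSpace X] [BorelSpace X]
    [MetricSpace Y] [MeasurableSpace Y]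
    [MetricSpace Z] [MeasurableSpace Z]
    (κ : Kernel Y X) [IsMarkovKernel κ] (η : Kernel Z Y) [IsMarkovKernel η]
    (L M : ℝ)
    (hκ : ∀ y y' : Y, BLdist (κ y) (κ y') ≤ L * dist y y')
    (hη : ∀ z z' : Z, BLdist (η z) (η z') ≤ M * dist z z') :
    ∀ z z' : Z, BLdist ((κ.comp η) z) ((κ.comp η) z') ≤ (max 1 L * M) * dist z z' := by
  intro z z'
  set K := max 1 L
  have hK : 0 < K := zero_lt_one.trans_le (le_max_left 1 L)
  refine BLdist_le fun f hb hf => ?_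
  set g : Y → ℝ := fun y => K⁻¹ * ∫ x, f x ∂κ y
  have hg : |(∫ y, g y ∂η z) - ∫ y, g y ∂η z'| ≤ M * dist z z' :=
    (abs_sub_integral_le_BLdist _ _
      (fun y => abs_inv_max_one_mul_le_one L (abs_integral_le_one_of_abs_le_one (κ y) hb))
      (lipschitzWith_one_inv_max_one_mul fun y y' =>
        (abs_sub_integral_le_BLdist _ _ hb hf).trans (hκ y y'))).trans (hη z z')
  have hcomp (w : Z) : ∫ x, f x ∂(κ.comp η) w = K * ∫ y, g y ∂η w := by
    have hfint : Integrable f ((κ.comp η) w) :=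
      .of_bound hf.continuous.aestronglyMeasurable 1 (ae_of_all _ hb)
    rw [Kernel.integral_comp hfint, integral_const_mul, ← mul_assoc, mul_inv_cancel₀ hK.ne',
      one_mul]
  calc |(∫ x, f x ∂(κ.comp η) z) - ∫ x, f x ∂(κ.comp η) z'|
      = K * |(∫ y, g y ∂η z) - ∫ y, g y ∂η z'| := by
        rw [hcomp, hcomp, ← mul_sub, abs_mul, abs_of_pos hK]
    _ ≤ K * M * dist z z' := by
        rw [mul_assoc]
        exact mul_le_mul_of_nonneg_left hg hK.le

/-- The composition of an `L`-Lipschitz Markov kernel `P(X|Y)` with an `M`-Lipschitz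
Markov kernel `P(Y|Z)` is `max{1, L}·M`-Lipschitz. -/
theorem stmt_15 {X Y Z : Type*}
    [MetricSpace X] [MeasurableSpace X] [BorelSpace X]
    [MetricSpace Y] [MeasurableSpace Y] [BorelSpace Y]
    [MetricSpace Z] [MeasurableSpace Z] [BorelSpace Z]
    (κ : Kernel Y X) [IsMarkovKernel κ] (η : Kernel Z Y) [IsMarkovKernel η]
    (L M : ℝ) (hL : 0 ≤ L) (hM : 0 ≤ M)
    (hκ : ∀ y y' : Y, BLdist (κ y) (κ y') ≤ L * dist y y')
    (hη : ∀ z z' : Z, BLdist (η z) (η z') ≤ M * dist z z') :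
    ∀ z z' : Z, BLdist ((κ.comp η) z) ((κ.comp η) z') ≤ (max 1 L * M) * dist z z' :=
  stmt_15_general κ η L M hκ hη
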